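/- arXiv:1605.06234 — 9 statements merged into one kernel-verified Lean document; each statement's English description precedes it below -/
import Mathlib

section
/- The six complex cubic forms v12 = XYZ, v13 = X(Z² − XY), v14 = X(XZ − Y²), v23 = Y(X² − YZ), v24 = Y(XY − Z²), v34 = 3XYZ − (X³ + Y³ + Z³) have no common zero on the projective plane; that is, for every (x, y, z) ∈ ℂ³ with (x, y, z) ≠ (0, 0, 0), at least one of the six values xyz, x(z² − xy), x(xz − y²), y(x² − yz), y(xy − z²), 3xyz − (x³ + y³ + z³) is nonzero. -/
theorem six_cubics_no_common_zero (x y z : ℂ) (h : (x, y, z) ≠ (0, 0, 0)) :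
    x * y * z ≠ 0 ∨
    x * (z ^ 2 - x * y) ≠ 0 ∨
    x * (x * z - y ^ 2) ≠ 0 ∨
    y * (x ^ 2 - y * z) ≠ 0 ∨
    y * (x * y - z ^ 2) ≠ 0 ∨
    3 * (x * y * z) - (x ^ 3 + y ^ 3 + z ^ 3) ≠ 0 := by
  by_contra hc
  push_neg at hc
  obtain ⟨h1, h2, h3, h4, h5, h6⟩ := hc
  apply h
  have cube : ∀ w : ℂ, w ^ 3 = 0 → w = 0 := fun w hw =>
    pow_eq_zero_iff (n := 3) (by norm_num) |>.mp hw
  rcases eq_or_ne x 0 with hx0 | hx0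
  · subst hx0
    rcases eq_or_ne y 0 with hy0 | hy0
    · subst hy0
      have hz : z = 0 := cube z (by linear_combination -h6)
      simp [hz]
    · have hz : z = 0 := by
        have hyz : y * (y * z) = 0 := by linear_combination -h4
        rcases mul_eq_zero.mp hyz with h' | h'
        · exact absurd h' hy0
        · exact (mul_eq_zero.mp h').resolve_left hy0
      subst hz
      exact absurd (cube y (by linear_combination -h6)) hy0
  · exfalso
    have hyz : y * z = 0 := by
      rcases mul_eq_zero.mp h1 with h' | h'
      · rcases mul_eq_zero.mp h' with h'' | h''
        · exact absurd h'' hx0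
        · rw [h'']; ring
      · rw [h']; ring
    rcases mul_eq_zero.mp hyz with hy0 | hz0
    · have hz : z = 0 := by
        have : x * (x * z) = 0 := by linear_combination h3 + x * y * hy0
        rcases mul_eq_zero.mp this with h' | h'
        · exact absurd h' hx0
        · exact (mul_eq_zero.mp h').resolve_left hx0
      subst hy0; subst hz; exact hx0 (cube x (by linear_combination -h6))
    · have hy : y = 0 := by
        have : x * (x * y) = 0 := by linear_combination -h2 + x * z * hz0
        rcases mul_eq_zero.mp this with h' | h'
        · exact absurd h' hx0
        · exact (mul_eq_zero.mp h').resolve_left hx0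
      subst hy; subst hz0; exact hx0 (cube x (by linear_combination -h6))
end

section
/- Let φ : ℂ³ → ℂ⁶ be defined by φ(x, y, z) = (xyz, x(z² − xy), x(xz − y²), y(x² − yz), y(xy − z²), 3xyz − (x³ + y³ + z³)). If (x, y, z) and (x₁, y₁, z₁) are nonzero vectors in ℂ³ such that φ(x₁, y₁, z₁) = t · φ(x, y, z) for some nonzero t ∈ ℂ, then either (x₁, y₁, z₁) is a nonzero scalar multiple of (x, y, z), or each of (x, y, z) and (x₁, y₁, z₁) is a nonzero scalar multiple of some element of S₁ = {(1,0,0), (0,1,0), (0,0,1)}, or each of (x, y, z) and (x₁, y₁, z₁) is a nonzero scalar multiple of some element of S₂ = {(1,1,1), (ω, ω², 1), (ω², ω, 1)}, where ω ∈ ℂ is a primitive cube root of unity (ω² + ω + 1 = 0). -/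
/-- The composition of the tangent-bundle morphism `ℙ² → Gr(2, ℂ⁴)` with the
Plücker embedding, written on homogeneous coordinate vectors. -/
noncomputable def phi (x y z : ℂ) : ℂ × ℂ × ℂ × ℂ × ℂ × ℂ :=
  (x * y * z, x * (z ^ 2 - x * y), x * (x * z - y ^ 2),
   y * (x ^ 2 - y * z), y * (x * y - z ^ 2),
   3 * (x * y * z) - (x ^ 3 + y ^ 3 + z ^ 3))

private lemma mul2 {t A a B b : ℂ} (h1 : A = t * a) (h2 : B = t * b) :
    A * B = t ^ 2 * (a * b) := by subst h1; subst h2; ring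

private lemma prop_aux {x y z x₁ y₁ z₁ q q₁ s : ℂ} (hs : s ≠ 0) (hq : q ≠ 0)
    (hv : ¬(x = 0 ∧ y = 0 ∧ z = 0))
    (hx : x₁ * q₁ = s * (x * q)) (hy : y₁ * q₁ = s * (y * q))
    (hz : z₁ * q₁ = s * (z * q)) :
    ∃ c : ℂ, c ≠ 0 ∧ (x₁, y₁, z₁) = c • (x, y, z) := by
  have hq₁ : q₁ ≠ 0 := by
    rintro rfl
    refine hv ⟨?_, ?_, ?_⟩
    · have h0 : s * (x * q) = 0 := by linear_combination -hx
      rcases mul_eq_zero.1 h0 with h | h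
      · exact absurd h hs
      · rcases mul_eq_zero.1 h with h | h
        · exact h
        · exact absurd h hq
    · have h0 : s * (y * q) = 0 := by linear_combination -hy
      rcases mul_eq_zero.1 h0 with h | h
      · exact absurd h hs
      · rcases mul_eq_zero.1 h with h | h
        · exact h
        · exact absurd h hq
    · have h0 : s * (z * q) = 0 := by linear_combination -hz
      rcases mul_eq_zero.1 h0 with h | h
      · exact absurd h hs
      · rcases mul_eq_zero.1 h with h | h
        · exact h
        · exact absurd h hq
  refine ⟨s * q / q₁, div_ne_zero (mul_ne_zero hs hq) hq₁, ?_⟩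
  simp only [Prod.smul_mk, smul_eq_mul, Prod.mk.injEq]
  refine ⟨?_, ?_, ?_⟩
  · field_simp; linear_combination hx
  · field_simp; linear_combination hy
  · field_simp; linear_combination hz

private lemma classify (ω : ℂ) (hω : ω ^ 2 + ω + 1 = 0) (x y z : ℂ)
    (hv : ¬(x = 0 ∧ y = 0 ∧ z = 0))
    (h1 : y * ((x * y - z ^ 2) * (x ^ 2 - y * z)) = 0)
    (h2 : z * ((x * z - y ^ 2) * (x ^ 2 - y * z)) = 0)
    (h3 : x * ((x * y - z ^ 2) * (x * z - y ^ 2)) = 0) :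
    ((y = 0 ∧ z = 0) ∨ (x = 0 ∧ z = 0) ∨ (x = 0 ∧ y = 0)) ∨
    ((x = z ∧ y = z) ∨ (x = ω * z ∧ y = ω ^ 2 * z) ∨ (x = ω ^ 2 * z ∧ y = ω * z)) := by
  by_cases ha : x * y - z ^ 2 = 0
  · by_cases hb : x * z - y ^ 2 = 0
    · by_cases hc : x ^ 2 - y * z = 0
      · -- a = b = c = 0 : cone over S₂
        have hz : z ≠ 0 := by
          rintro rfl
          refine hv ⟨?_, ?_, rfl⟩
          · have hx2 : x ^ 2 = 0 := by linear_combination hc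
            exact pow_eq_zero_iff (by norm_num) |>.1 hx2
          · have hy2 : y ^ 2 = 0 := by linear_combination -hb
            exact pow_eq_zero_iff (by norm_num) |>.1 hy2
        have hx3 : (x - z) * ((x - ω * z) * (x - ω ^ 2 * z)) = 0 := by
          linear_combination x * hc + z * ha +
            (-(x ^ 2 * z) + ω * x * z ^ 2 - (ω - 1) * z ^ 3) * hω
        rcases mul_eq_zero.1 hx3 with hxz | hrest
        · have hxz' : x = z := by linear_combination hxz
          have hyz : z * (z - y) = 0 := by linear_combination hc - (x + z) * hxz
          have hy : y = z := by
            rcases mul_eq_zero.1 hyz with h | h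
            · exact absurd h hz
            · linear_combination -h
          exact Or.inr (Or.inl ⟨hxz', hy⟩)
        · rcases mul_eq_zero.1 hrest with hxz | hxz
          · have hx' : x = ω * z := by linear_combination hxz
            have hyz : z * (ω ^ 2 * z - y) = 0 := by
              linear_combination hc - (x + ω * z) * hxz
            have hy : y = ω ^ 2 * z := by
              rcases mul_eq_zero.1 hyz with h | h
              · exact absurd h hz
              · linear_combination -h
            exact Or.inr (Or.inr (Or.inl ⟨hx', hy⟩))
          · have hx' : x = ω ^ 2 * z := by linear_combination hxz
            have hyz : z * (ω * z - y) = 0 := by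
              linear_combination hc - (x + ω ^ 2 * z) * hxz - ω * (ω - 1) * z ^ 2 * hω
            have hy : y = ω * z := by
              rcases mul_eq_zero.1 hyz with h | h
              · exact absurd h hz
              · linear_combination -h
            exact Or.inr (Or.inr (Or.inr ⟨hx', hy⟩))
      · -- a = b = 0, c ≠ 0 ⇒ y = z = 0
        have key : y * z * (y * z - x ^ 2) = 0 := by
          linear_combination (-(x * z)) * ha + (-(z ^ 2)) * hb
        have hyz : y * z = 0 := by
          rcases mul_eq_zero.1 key with h | h
          · exact h
          · exact absurd (by linear_combination -h : x ^ 2 - y * z = 0) hc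
        rcases mul_eq_zero.1 hyz with hy | hz
        · have hz2 : z ^ 2 = 0 := by linear_combination -ha + x * hy
          exact Or.inl (Or.inl ⟨hy, pow_eq_zero_iff (by norm_num) |>.1 hz2⟩)
        · have hy2 : y ^ 2 = 0 := by linear_combination -hb + x * hz
          exact Or.inl (Or.inl ⟨pow_eq_zero_iff (by norm_num) |>.1 hy2, hz⟩)
    · by_cases hc : x ^ 2 - y * z = 0
      · -- a = 0, c = 0, b ≠ 0 ⇒ xz = 0
        have key : x * z * (x * z - y ^ 2) = 0 := by
          linear_combination (-(y * z)) * ha + z ^ 2 * hc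
        have hxz : x * z = 0 := by
          rcases mul_eq_zero.1 key with h | h
          · exact h
          · exact absurd h hb
        rcases mul_eq_zero.1 hxz with hx | hz
        · have hyz : y * z = 0 := by linear_combination -hc + x * hx
          rcases mul_eq_zero.1 hyz with hy | hz
          · exact Or.inl (Or.inr (Or.inr ⟨hx, hy⟩))
          · exact Or.inl (Or.inr (Or.inl ⟨hx, hz⟩))
        · have hxy : x * y = 0 := by linear_combination ha + z * hz
          rcases mul_eq_zero.1 hxy with hx | hy
          · exact Or.inl (Or.inr (Or.inl ⟨hx, hz⟩))
          · exact Or.inl (Or.inl ⟨hy, hz⟩)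
      · -- a = 0, b ≠ 0, c ≠ 0 : h2 ⇒ z = 0, a ⇒ xy = 0
        have hz : z = 0 := by
          rcases mul_eq_zero.1 h2 with h | h
          · exact h
          · rcases mul_eq_zero.1 h with h' | h'
            · exact absurd h' hb
            · exact absurd h' hc
        have hxy : x * y = 0 := by linear_combination ha + z * hz
        rcases mul_eq_zero.1 hxy with hx | hy
        · exact Or.inl (Or.inr (Or.inl ⟨hx, hz⟩))
        · exact Or.inl (Or.inl ⟨hy, hz⟩)
  · by_cases hb : x * z - y ^ 2 = 0
    · by_cases hc : x ^ 2 - y * z = 0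
      · -- b = c = 0, a ≠ 0 ⇒ xy = 0
        have key : x * y * (x * y - z ^ 2) = 0 := by
          linear_combination (-(y * z)) * hb + y ^ 2 * hc
        have hxy : x * y = 0 := by
          rcases mul_eq_zero.1 key with h | h
          · exact h
          · exact absurd h ha
        rcases mul_eq_zero.1 hxy with hx | hy
        · have hyz : y * z = 0 := by linear_combination -hc + x * hx
          rcases mul_eq_zero.1 hyz with hy | hz
          · exact Or.inl (Or.inr (Or.inr ⟨hx, hy⟩))
          · exact Or.inl (Or.inr (Or.inl ⟨hx, hz⟩))
        · have hxz : x * z = 0 := by linear_combination hb + y * hy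
          rcases mul_eq_zero.1 hxz with hx | hz
          · exact Or.inl (Or.inr (Or.inr ⟨hx, hy⟩))
          · exact Or.inl (Or.inl ⟨hy, hz⟩)
      · -- b = 0, a ≠ 0, c ≠ 0 : h1 ⇒ y = 0, b ⇒ xz = 0
        have hy : y = 0 := by
          rcases mul_eq_zero.1 h1 with h | h
          · exact h
          · rcases mul_eq_zero.1 h with h' | h'
            · exact absurd h' ha
            · exact absurd h' hc
        have hxz : x * z = 0 := by linear_combination hb + y * hy
        rcases mul_eq_zero.1 hxz with hx | hz
        · exact Or.inl (Or.inr (Or.inr ⟨hx, hy⟩))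
        · exact Or.inl (Or.inl ⟨hy, hz⟩)
    · by_cases hc : x ^ 2 - y * z = 0
      · -- c = 0, a ≠ 0, b ≠ 0 : h3 ⇒ x = 0, c ⇒ yz = 0
        have hx : x = 0 := by
          rcases mul_eq_zero.1 h3 with h | h
          · exact h
          · rcases mul_eq_zero.1 h with h' | h'
            · exact absurd h' ha
            · exact absurd h' hb
        have hyz : y * z = 0 := by linear_combination -hc + x * hx
        rcases mul_eq_zero.1 hyz with hy | hz
        · exact Or.inl (Or.inr (Or.inr ⟨hx, hy⟩))
        · exact Or.inl (Or.inr (Or.inl ⟨hx, hz⟩))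
      · -- a,b,c all ≠ 0 : h1 ⇒ y = 0, h2 ⇒ z = 0
        have hy : y = 0 := by
          rcases mul_eq_zero.1 h1 with h | h
          · exact h
          · rcases mul_eq_zero.1 h with h' | h'
            · exact absurd h' ha
            · exact absurd h' hc
        have hz : z = 0 := by
          rcases mul_eq_zero.1 h2 with h | h
          · exact h
          · rcases mul_eq_zero.1 h with h' | h'
            · exact absurd h' hb
            · exact absurd h' hc
        exact Or.inl (Or.inl ⟨hy, hz⟩)

private lemma axis_scalar {x y z : ℂ} (hv : ¬(x = 0 ∧ y = 0 ∧ z = 0))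
    (H : (y = 0 ∧ z = 0) ∨ (x = 0 ∧ z = 0) ∨ (x = 0 ∧ y = 0)) :
    ∃ c : ℂ, c ≠ 0 ∧
      ((x, y, z) = c • ((1 : ℂ), (0 : ℂ), (0 : ℂ)) ∨
       (x, y, z) = c • ((0 : ℂ), (1 : ℂ), (0 : ℂ)) ∨
       (x, y, z) = c • ((0 : ℂ), (0 : ℂ), (1 : ℂ))) := by
  rcases H with ⟨hy, hz⟩ | ⟨hx, hz⟩ | ⟨hx, hy⟩
  · exact ⟨x, fun h => hv ⟨h, hy, hz⟩, Or.inl (by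
      simp only [Prod.smul_mk, smul_eq_mul, mul_one, mul_zero, hy, hz])⟩
  · exact ⟨y, fun h => hv ⟨hx, h, hz⟩, Or.inr (Or.inl (by
      simp only [Prod.smul_mk, smul_eq_mul, mul_one, mul_zero, hx, hz]))⟩
  · exact ⟨z, fun h => hv ⟨hx, hy, h⟩, Or.inr (Or.inr (by
      simp only [Prod.smul_mk, smul_eq_mul, mul_one, mul_zero, hx, hy]))⟩

private lemma cube_scalar (ω : ℂ) {x y z : ℂ} (hv : ¬(x = 0 ∧ y = 0 ∧ z = 0))
    (H : (x = z ∧ y = z) ∨ (x = ω * z ∧ y = ω ^ 2 * z) ∨ (x = ω ^ 2 * z ∧ y = ω * z)) :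
    ∃ c : ℂ, c ≠ 0 ∧
      ((x, y, z) = c • ((1 : ℂ), (1 : ℂ), (1 : ℂ)) ∨
       (x, y, z) = c • (ω, ω ^ 2, (1 : ℂ)) ∨
       (x, y, z) = c • (ω ^ 2, ω, (1 : ℂ))) := by
  have hz : z ≠ 0 := by
    rintro rfl
    rcases H with ⟨hx, hy⟩ | ⟨hx, hy⟩ | ⟨hx, hy⟩ <;>
      exact hv ⟨by simp [hx], by simp [hy], rfl⟩
  rcases H with ⟨hx, hy⟩ | ⟨hx, hy⟩ | ⟨hx, hy⟩
  · refine ⟨z, hz, Or.inl ?_⟩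
    rw [hx, hy]; simp [Prod.ext_iff, smul_eq_mul]
  · refine ⟨z, hz, Or.inr (Or.inl ?_)⟩
    rw [hx, hy]; simp [Prod.ext_iff, smul_eq_mul, mul_comm]
  · refine ⟨z, hz, Or.inr (Or.inr ?_)⟩
    rw [hx, hy]; simp [Prod.ext_iff, smul_eq_mul, mul_comm]

theorem phi_generically_injective (ω : ℂ) (hω : ω ^ 2 + ω + 1 = 0)
    (x y z x₁ y₁ z₁ : ℂ)
    (h : (x, y, z) ≠ (0, 0, 0)) (h₁ : (x₁, y₁, z₁) ≠ (0, 0, 0))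
    (t : ℂ) (ht : t ≠ 0) (heq : phi x₁ y₁ z₁ = t • phi x y z) :
    (∃ c : ℂ, c ≠ 0 ∧ (x₁, y₁, z₁) = c • (x, y, z)) ∨
    ((∃ c : ℂ, c ≠ 0 ∧
        ((x, y, z) = c • ((1 : ℂ), (0 : ℂ), (0 : ℂ)) ∨
         (x, y, z) = c • ((0 : ℂ), (1 : ℂ), (0 : ℂ)) ∨
         (x, y, z) = c • ((0 : ℂ), (0 : ℂ), (1 : ℂ)))) ∧
     (∃ c : ℂ, c ≠ 0 ∧
        ((x₁, y₁, z₁) = c • ((1 : ℂ), (0 : ℂ), (0 : ℂ)) ∨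
         (x₁, y₁, z₁) = c • ((0 : ℂ), (1 : ℂ), (0 : ℂ)) ∨
         (x₁, y₁, z₁) = c • ((0 : ℂ), (0 : ℂ), (1 : ℂ))))) ∨
    ((∃ c : ℂ, c ≠ 0 ∧
        ((x, y, z) = c • ((1 : ℂ), (1 : ℂ), (1 : ℂ)) ∨
         (x, y, z) = c • (ω, ω ^ 2, (1 : ℂ)) ∨
         (x, y, z) = c • (ω ^ 2, ω, (1 : ℂ)))) ∧
     (∃ c : ℂ, c ≠ 0 ∧
        ((x₁, y₁, z₁) = c • ((1 : ℂ), (1 : ℂ), (1 : ℂ)) ∨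
         (x₁, y₁, z₁) = c • (ω, ω ^ 2, (1 : ℂ)) ∨
         (x₁, y₁, z₁) = c • (ω ^ 2, ω, (1 : ℂ))))) := by
  have hv : ¬(x = 0 ∧ y = 0 ∧ z = 0) := by simpa [Prod.mk.injEq] using h
  have hv₁ : ¬(x₁ = 0 ∧ y₁ = 0 ∧ z₁ = 0) := by simpa [Prod.mk.injEq] using h₁
  simp only [phi, Prod.smul_mk, smul_eq_mul, Prod.mk.injEq] at heq
  obtain ⟨e0, e1, e2, e3, e4, e5⟩ := heq
  have ht2 : t ^ 2 ≠ 0 := pow_ne_zero 2 ht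
  -- the nine key identities
  have H1x : x₁ * (y₁ * ((x₁ * y₁ - z₁ ^ 2) * (x₁ ^ 2 - y₁ * z₁))) =
      t ^ 2 * (x * (y * ((x * y - z ^ 2) * (x ^ 2 - y * z)))) := by
    linear_combination (-(1 : ℂ)) * mul2 e1 e3
  have H1y : y₁ * (y₁ * ((x₁ * y₁ - z₁ ^ 2) * (x₁ ^ 2 - y₁ * z₁))) =
      t ^ 2 * (y * (y * ((x * y - z ^ 2) * (x ^ 2 - y * z)))) := by
    linear_combination mul2 e3 e4
  have H1z : z₁ * (y₁ * ((x₁ * y₁ - z₁ ^ 2) * (x₁ ^ 2 - y₁ * z₁))) =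
      t ^ 2 * (z * (y * ((x * y - z ^ 2) * (x ^ 2 - y * z)))) := by
    linear_combination mul2 e2 e4 + mul2 e4 e4
  have H2x : x₁ * (z₁ * ((x₁ * z₁ - y₁ ^ 2) * (x₁ ^ 2 - y₁ * z₁))) =
      t ^ 2 * (x * (z * ((x * z - y ^ 2) * (x ^ 2 - y * z)))) := by
    linear_combination mul2 e2 e2 + mul2 e2 e4
  have H2y : y₁ * (z₁ * ((x₁ * z₁ - y₁ ^ 2) * (x₁ ^ 2 - y₁ * z₁))) =
      t ^ 2 * (y * (z * ((x * z - y ^ 2) * (x ^ 2 - y * z)))) := by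
    linear_combination mul2 e1 e3 + mul2 e3 e3
  have H2z : z₁ * (z₁ * ((x₁ * z₁ - y₁ ^ 2) * (x₁ ^ 2 - y₁ * z₁))) =
      t ^ 2 * (z * (z * ((x * z - y ^ 2) * (x ^ 2 - y * z)))) := by
    linear_combination (-(1 : ℂ)) * mul2 e0 e5 + mul2 e1 e2 + 2 * mul2 e1 e4 + mul2 e3 e4
  have H3x : x₁ * (x₁ * ((x₁ * y₁ - z₁ ^ 2) * (x₁ * z₁ - y₁ ^ 2))) =
      t ^ 2 * (x * (x * ((x * y - z ^ 2) * (x * z - y ^ 2)))) := by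
    linear_combination (-(1 : ℂ)) * mul2 e1 e2
  have H3y : y₁ * (x₁ * ((x₁ * y₁ - z₁ ^ 2) * (x₁ * z₁ - y₁ ^ 2))) =
      t ^ 2 * (y * (x * ((x * y - z ^ 2) * (x * z - y ^ 2)))) := by
    linear_combination mul2 e2 e4
  have H3z : z₁ * (x₁ * ((x₁ * y₁ - z₁ ^ 2) * (x₁ * z₁ - y₁ ^ 2))) =
      t ^ 2 * (z * (x * ((x * y - z ^ 2) * (x * z - y ^ 2)))) := by
    linear_combination (-(1 : ℂ)) * mul2 e1 e1 + (-(1 : ℂ)) * mul2 e1 e3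
  by_cases hQ1 : y * ((x * y - z ^ 2) * (x ^ 2 - y * z)) = 0
  · by_cases hQ2 : z * ((x * z - y ^ 2) * (x ^ 2 - y * z)) = 0
    · by_cases hQ3 : x * ((x * y - z ^ 2) * (x * z - y ^ 2)) = 0
      · -- degenerate case
        have hzero : ∀ {Qv : ℂ}, x₁ * Qv = 0 → y₁ * Qv = 0 → z₁ * Qv = 0 → Qv = 0 := by
          intro Qv hA hB hC
          by_contra hne
          exact hv₁ ⟨(mul_eq_zero.1 hA).resolve_right hne,
            (mul_eq_zero.1 hB).resolve_right hne, (mul_eq_zero.1 hC).resolve_right hne⟩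
        rw [hQ1, mul_zero, mul_zero] at H1x H1y H1z
        rw [hQ2, mul_zero, mul_zero] at H2x H2y H2z
        rw [hQ3, mul_zero, mul_zero] at H3x H3y H3z
        have hQ1₁ := hzero H1x H1y H1z
        have hQ2₁ := hzero H2x H2y H2z
        have hQ3₁ := hzero H3x H3y H3z
        have C := classify ω hω x y z hv hQ1 hQ2 hQ3
        have C₁ := classify ω hω x₁ y₁ z₁ hv₁ hQ1₁ hQ2₁ hQ3₁
        rcases C with hA | hC
        · -- v on a coordinate axis: p₅(v) ≠ 0
          have hp5 : 3 * (x * y * z) - (x ^ 3 + y ^ 3 + z ^ 3) ≠ 0 := by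
            rcases hA with ⟨hy0, hz0⟩ | ⟨hx0, hz0⟩ | ⟨hx0, hy0⟩
            · have hx0 : x ≠ 0 := fun hh => hv ⟨hh, hy0, hz0⟩
              have : 3 * (x * y * z) - (x ^ 3 + y ^ 3 + z ^ 3) = -x ^ 3 := by
                rw [hy0, hz0]; ring
              rw [this]
              simpa using pow_ne_zero 3 hx0
            · have hy0' : y ≠ 0 := fun hh => hv ⟨hx0, hh, hz0⟩
              have : 3 * (x * y * z) - (x ^ 3 + y ^ 3 + z ^ 3) = -y ^ 3 := by
                rw [hx0, hz0]; ring
              rw [this]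
              simpa using pow_ne_zero 3 hy0'
            · have hz0' : z ≠ 0 := fun hh => hv ⟨hx0, hy0, hh⟩
              have : 3 * (x * y * z) - (x ^ 3 + y ^ 3 + z ^ 3) = -z ^ 3 := by
                rw [hx0, hy0]; ring
              rw [this]
              simpa using pow_ne_zero 3 hz0'
          have hP5 : 3 * (x₁ * y₁ * z₁) - (x₁ ^ 3 + y₁ ^ 3 + z₁ ^ 3) ≠ 0 := by
            rw [e5]; exact mul_ne_zero ht hp5
          rcases C₁ with hA₁ | hC₁
          · exact Or.inr (Or.inl ⟨axis_scalar hv hA, axis_scalar hv₁ hA₁⟩)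
          · exfalso
            apply hP5
            rcases hC₁ with ⟨hx', hy'⟩ | ⟨hx', hy'⟩ | ⟨hx', hy'⟩
            · rw [hx', hy']; ring
            · rw [hx', hy']
              linear_combination (-(z₁ ^ 3) * (ω - 1) ^ 2 * (ω ^ 2 + ω + 1)) * hω
            · rw [hx', hy']
              linear_combination (-(z₁ ^ 3) * (ω - 1) ^ 2 * (ω ^ 2 + ω + 1)) * hω
        · -- v on cone over S₂ : p₀(v) ≠ 0
          have hp0 : x * y * z ≠ 0 := by
            rcases hC with ⟨hx', hy'⟩ | ⟨hx', hy'⟩ | ⟨hx', hy'⟩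
            · have hz0 : z ≠ 0 := by
                rintro rfl
                exact hv ⟨by rw [hx'], by rw [hy'], rfl⟩
              rw [hx', hy']
              exact mul_ne_zero (mul_ne_zero hz0 hz0) hz0
            · have hz0 : z ≠ 0 := by
                rintro rfl
                exact hv ⟨by rw [hx']; ring, by rw [hy']; ring, rfl⟩
              have hval : x * y * z = z ^ 3 := by
                rw [hx', hy']
                linear_combination (z ^ 3 * (ω - 1)) * hω
              rw [hval]
              exact pow_ne_zero 3 hz0
            · have hz0 : z ≠ 0 := by
                rintro rfl
                exact hv ⟨by rw [hx']; ring, by rw [hy']; ring, rfl⟩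
              have hval : x * y * z = z ^ 3 := by
                rw [hx', hy']
                linear_combination (z ^ 3 * (ω - 1)) * hω
              rw [hval]
              exact pow_ne_zero 3 hz0
          have hP0 : x₁ * y₁ * z₁ ≠ 0 := by
            rw [e0]; exact mul_ne_zero ht hp0
          rcases C₁ with hA₁ | hC₁
          · exfalso
            refine absurd ?_ hP0
            rcases hA₁ with ⟨a, b⟩ | ⟨a, b⟩ | ⟨a, b⟩ <;> rw [a, b] <;> ring
          · exact Or.inr (Or.inr ⟨cube_scalar ω hv hC, cube_scalar ω hv₁ hC₁⟩)
      · exact Or.inl (prop_aux ht2 hQ3 hv H3x H3y H3z)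
    · exact Or.inl (prop_aux ht2 hQ2 hv H2x H2y H2z)
  · exact Or.inl (prop_aux ht2 hQ1 hv H1x H1y H1z)
end

section
/- Let φ : ℂ³ → ℂ⁶ be defined by φ(x, y, z) = (xyz, x(z² − xy), x(xz − y²), y(x² − yz), y(xy − z²), 3xyz − (x³ + y³ + z³)). For a nonzero vector (x, y, z) ∈ ℂ³, the vector φ(x, y, z) is a nonzero scalar multiple of (0, 0, 0, 0, 0, 1) if and only if (x, y, z) is a nonzero scalar multiple of one of (1, 0, 0), (0, 1, 0), (0, 0, 1). -/
theorem phi_fiber_over_last_coordinate_point (x y z : ℂ)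
    (h : (x, y, z) ≠ (0, 0, 0)) :
    (∃ t : ℂ, t ≠ 0 ∧
        phi x y z = t • ((0 : ℂ), (0 : ℂ), (0 : ℂ), (0 : ℂ), (0 : ℂ), (1 : ℂ))) ↔
    (∃ c : ℂ, c ≠ 0 ∧
        ((x, y, z) = c • ((1 : ℂ), (0 : ℂ), (0 : ℂ)) ∨
         (x, y, z) = c • ((0 : ℂ), (1 : ℂ), (0 : ℂ)) ∨
         (x, y, z) = c • ((0 : ℂ), (0 : ℂ), (1 : ℂ)))) := by
  constructor
  · rintro ⟨t, ht, heq⟩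
    simp only [phi, Prod.smul_mk, smul_eq_mul, mul_zero, mul_one, Prod.mk.injEq] at heq
    obtain ⟨e1, e2, e3, e4, e5, e6⟩ := heq
    have hxy : x * y = 0 := by
      have h3 : (x * y) ^ 3 = 0 := by linear_combination (x * y ^ 2) * e4 + y ^ 3 * e1
      exact pow_eq_zero_iff (n := 3) (by norm_num) |>.mp h3
    rcases mul_eq_zero.mp hxy with hx | hy
    · have hyz : y * z = 0 := by
        have h2 : (y * z) ^ 2 = 0 := by
          subst hx; linear_combination (-z) * e4
        exact pow_eq_zero_iff (n := 2) (by norm_num) |>.mp h2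
      rcases mul_eq_zero.mp hyz with hy | hz
      · refine ⟨z, ?_, Or.inr (Or.inr ?_)⟩
        · intro hz; apply h; simp [hx, hy, hz]
        · simp [hx, hy]
      · refine ⟨y, ?_, Or.inr (Or.inl ?_)⟩
        · intro hy; apply h; simp [hx, hy, hz]
        · simp [hx, hz]
    · have hxz : x * z = 0 := by
        have h2 : (x * z) ^ 2 = 0 := by
          subst hy; linear_combination x * e2
        exact pow_eq_zero_iff (n := 2) (by norm_num) |>.mp h2
      rcases mul_eq_zero.mp hxz with hx | hz
      · refine ⟨z, ?_, Or.inr (Or.inr ?_)⟩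
        · intro hz; apply h; simp [hx, hy, hz]
        · simp [hx, hy]
      · refine ⟨x, ?_, Or.inl ?_⟩
        · intro hx; apply h; simp [hx, hy, hz]
        · simp [hy, hz]
  · rintro ⟨c, hc, hcase | hcase | hcase⟩ <;>
    · simp only [Prod.smul_mk, smul_eq_mul, mul_zero, mul_one, Prod.mk.injEq] at hcase
      obtain ⟨hx, hy, hz⟩ := hcase
      refine ⟨-c ^ 3, by simpa using pow_ne_zero 3 hc, ?_⟩
      simp only [hx, hy, hz, phi, Prod.smul_mk, smul_eq_mul, mul_zero, mul_one,
        Prod.mk.injEq]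
      norm_num
end

section
/- Let φ : ℂ³ → ℂ⁶ be defined by φ(x, y, z) = (xyz, x(z² − xy), x(xz − y²), y(x² − yz), y(xy − z²), 3xyz − (x³ + y³ + z³)), and let ω ∈ ℂ satisfy ω² + ω + 1 = 0. For a nonzero vector (x, y, z) ∈ ℂ³, the vector φ(x, y, z) is a nonzero scalar multiple of (1, 0, 0, 0, 0, 0) if and only if (x, y, z) is a nonzero scalar multiple of one of (1, 1, 1), (ω, ω², 1), (ω², ω, 1). -/
theorem phi_fiber_over_first_coordinate_point (ω : ℂ) (hω : ω ^ 2 + ω + 1 = 0)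
    (x y z : ℂ) (h : (x, y, z) ≠ (0, 0, 0)) :
    (∃ t : ℂ, t ≠ 0 ∧
        phi x y z = t • ((1 : ℂ), (0 : ℂ), (0 : ℂ), (0 : ℂ), (0 : ℂ), (0 : ℂ))) ↔
    (∃ c : ℂ, c ≠ 0 ∧
        ((x, y, z) = c • ((1 : ℂ), (1 : ℂ), (1 : ℂ)) ∨
         (x, y, z) = c • (ω, ω ^ 2, (1 : ℂ)) ∨
         (x, y, z) = c • (ω ^ 2, ω, (1 : ℂ)))) := by
  have hω3 : ω ^ 3 = 1 := by linear_combination (ω - 1) * hω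
  constructor
  · rintro ⟨t, ht, heq⟩
    simp only [phi, Prod.smul_def, smul_eq_mul, Prod.mk.injEq, mul_one, mul_zero] at heq
    obtain ⟨e1, e2, e3, e4, e5, e6⟩ := heq
    have hxyz : x * y * z ≠ 0 := by rw [e1]; exact ht
    have hx : x ≠ 0 := fun h0 => hxyz (by rw [h0]; ring)
    have hy : y ≠ 0 := fun h0 => hxyz (by rw [h0]; ring)
    have hz : z ≠ 0 := fun h0 => hxyz (by rw [h0]; ring)
    have hz2 : z ^ 2 = x * y := sub_eq_zero.mp ((mul_eq_zero.mp e2).resolve_left hx)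
    have hx2 : x ^ 2 = y * z := sub_eq_zero.mp ((mul_eq_zero.mp e4).resolve_left hy)
    have hxz : x ^ 3 = z ^ 3 := by linear_combination x * hx2 - z * hz2
    have hcube : (x - z) * (x - ω * z) * (x - ω ^ 2 * z) = 0 := by
      linear_combination hxz + (-x ^ 2 * z + ω * x * z ^ 2 + (1 - ω) * z ^ 3) * hω
    rcases mul_eq_zero.mp hcube with h12 | h3
    · rcases mul_eq_zero.mp h12 with h1 | h2
      · have hx' : x = z := sub_eq_zero.mp h1
        have hzy : z * (z - y) = 0 := by linear_combination hz2 + y * hx'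
        have hy' : y = z := (sub_eq_zero.mp ((mul_eq_zero.mp hzy).resolve_left hz)).symm
        exact ⟨z, hz, Or.inl (by simp [Prod.smul_def, smul_eq_mul, hx', hy'])⟩
      · have hx' : x = ω * z := sub_eq_zero.mp h2
        have hzy : z * (z - ω * y) = 0 := by linear_combination hz2 + y * hx'
        have hzy' : z = ω * y := sub_eq_zero.mp ((mul_eq_zero.mp hzy).resolve_left hz)
        have hy' : y = ω ^ 2 * z := by linear_combination (-ω ^ 2) * hzy' + (-y) * hω3
        refine ⟨z, hz, Or.inr (Or.inl ?_)⟩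
        simp only [Prod.smul_def, smul_eq_mul, Prod.mk.injEq, mul_one]
        exact ⟨by linear_combination hx', by linear_combination hy', trivial⟩
    · have hx' : x = ω ^ 2 * z := sub_eq_zero.mp h3
      have hzy : z * (z - ω ^ 2 * y) = 0 := by linear_combination hz2 + y * hx'
      have hzy' : z = ω ^ 2 * y := sub_eq_zero.mp ((mul_eq_zero.mp hzy).resolve_left hz)
      have hy' : y = ω * z := by linear_combination (-ω) * hzy' + (-y) * hω3
      refine ⟨z, hz, Or.inr (Or.inr ?_)⟩
      simp only [Prod.smul_def, smul_eq_mul, Prod.mk.injEq, mul_one]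
      exact ⟨by linear_combination hx', by linear_combination hy', trivial⟩
  · rintro ⟨c, hc, h1 | h2 | h3⟩
    · simp only [Prod.smul_def, smul_eq_mul, Prod.mk.injEq, mul_one] at h1
      obtain ⟨hx', hy', hz'⟩ := h1
      rw [hx', hy', hz']
      refine ⟨c ^ 3, pow_ne_zero 3 hc, ?_⟩
      simp only [phi, Prod.smul_def, smul_eq_mul, Prod.mk.injEq, mul_one, mul_zero]
      refine ⟨by ring, by ring, by ring, by ring, by ring, by ring⟩
    · simp only [Prod.smul_def, smul_eq_mul, Prod.mk.injEq, mul_one] at h2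
      obtain ⟨hx', hy', hz'⟩ := h2
      rw [hx', hy', hz']
      refine ⟨c ^ 3, pow_ne_zero 3 hc, ?_⟩
      simp only [phi, Prod.smul_def, smul_eq_mul, Prod.mk.injEq, mul_one, mul_zero]
      refine ⟨by linear_combination c ^ 3 * hω3, by linear_combination (-c ^ 3 * ω) * hω3,
        by linear_combination (-c ^ 3 * ω ^ 2) * hω3, by ring,
        by linear_combination c ^ 3 * ω ^ 2 * hω3,
        by linear_combination c ^ 3 * (1 - ω ^ 3) * hω3⟩
    · simp only [Prod.smul_def, smul_eq_mul, Prod.mk.injEq, mul_one] at h3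
      obtain ⟨hx', hy', hz'⟩ := h3
      rw [hx', hy', hz']
      refine ⟨c ^ 3, pow_ne_zero 3 hc, ?_⟩
      simp only [phi, Prod.smul_def, smul_eq_mul, Prod.mk.injEq, mul_one, mul_zero]
      refine ⟨by linear_combination c ^ 3 * hω3, by linear_combination (-c ^ 3 * ω ^ 2) * hω3,
        by ring, by linear_combination c ^ 3 * ω ^ 2 * hω3,
        by linear_combination c ^ 3 * ω * hω3,
        by linear_combination c ^ 3 * (1 - ω ^ 3) * hω3⟩
end

section
/- The set of points of the complex projective plane ℙ²(ℂ) (nonzero vectors (x, y, z) ∈ ℂ³ up to nonzero scalar) satisfying xyz = 0 and x³ + y³ + z³ = 0 consists of exactly 9 points. -/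
/-!
A point of `xyz = 0` has a vanishing coordinate `x_i`; on the Fermat curve `∑ x_k ^ n = 0` the
cyclically next coordinate is then nonzero, and normalising it to `1` makes the last one a root
`t` of `t ^ n = -1`. So the points are the classes of `(0, 1, t)` cyclically shifted by
`i ∈ ℤ/3`, and they are pairwise distinct because `t ≠ 0` makes `i` the only vanishing
coordinate. This gives `3 · #{t | t ^ n = -1}` points, i.e. `3 · 3 = 9` over `ℂ` for `n = 3`.
-/

open scoped LinearAlgebra.Projectivization
open Projectivization Polynomial

theorem IsPrimitiveRoot.natCard_pow_eq {R : Type*} [CommRing R] [IsDomain R] {ζ α : R} {n : ℕ}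
    (hζ : IsPrimitiveRoot ζ n) (hn : n ≠ 0) (hα : α ≠ 0) :
    Nat.card {t : R // t ^ n = α ^ n} = n := by
  classical
  have hαn : α ^ n ≠ 0 := pow_ne_zero n hα
  calc Nat.card {t : R // t ^ n = α ^ n}
      = Nat.card (nthRootsFinset n (α ^ n)) :=
        Nat.card_congr (Equiv.subtypeEquivRight fun t =>
          (Polynomial.mem_nthRootsFinset (Nat.pos_of_ne_zero hn) _).symm)
    _ = Multiset.card (nthRoots n (α ^ n)) := by
        rw [Nat.card_eq_fintype_card, Fintype.card_coe, nthRootsFinset_def,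
          Multiset.toFinset_card_of_nodup (hζ.nthRoots_nodup hαn)]
    _ = n := by rw [hζ.card_nthRoots, if_pos ⟨α, rfl⟩]

theorem ne_zero_of_pow_eq_neg_one {R : Type*} [Ring R] [Nontrivial R] {n : ℕ} (hn : n ≠ 0)
    {t : R} (ht : t ^ n = -1) : t ≠ 0 := by
  rintro rfl
  simp [zero_pow hn] at ht

theorem Projectivization.mk_rep_mem_iff {K V : Type*} [DivisionRing K] [AddCommGroup V]
    [Module K V] {C : Set V} (hC : ∀ (c : K) (v : V), c ≠ 0 → (c • v ∈ C ↔ v ∈ C))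
    {v : V} (hv : v ≠ 0) :
    (mk K v hv).rep ∈ C ↔ v ∈ C := by
  obtain ⟨a, ha⟩ := exists_smul_eq_mk_rep K v hv
  rw [← ha, Units.smul_def, hC _ _ a.ne_zero]

variable {K : Type*} [Field K]

variable (K) in
def coordTriangle : Set (Fin 3 → K) := {v | ∏ k, v k = 0}

variable (K) in
def fermatCone (n : ℕ) : Set (Fin 3 → K) := {v | ∑ k, v k ^ n = 0}

theorem smul_mem_coordTriangle_iff {c : K} (hc : c ≠ 0) {v : Fin 3 → K} :
    c • v ∈ coordTriangle K ↔ v ∈ coordTriangle K := by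
  simp [coordTriangle, Finset.prod_mul_distrib, hc]

theorem smul_mem_fermatCone_iff {n : ℕ} {c : K} (hc : c ≠ 0) {v : Fin 3 → K} :
    c • v ∈ fermatCone K n ↔ v ∈ fermatCone K n := by
  simp [fermatCone, mul_pow, ← Finset.mul_sum, hc]

theorem comp_addRight_mem_coordTriangle_iff (i : Fin 3) {v : Fin 3 → K} :
    v ∘ (· + i) ∈ coordTriangle K ↔ v ∈ coordTriangle K := by
  simp only [coordTriangle, Set.mem_ofPred_eq, Function.comp_apply]
  rw [Fintype.prod_equiv (Equiv.addRight i) (fun k => v (k + i)) v fun _ => rfl]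

theorem comp_addRight_mem_fermatCone_iff {n : ℕ} (i : Fin 3) {v : Fin 3 → K} :
    v ∘ (· + i) ∈ fermatCone K n ↔ v ∈ fermatCone K n := by
  simp only [fermatCone, Set.mem_ofPred_eq, Function.comp_apply]
  rw [Fintype.sum_equiv (Equiv.addRight i) (fun k => v (k + i) ^ n) (v · ^ n) fun _ => rfl]

def sideVec (i : Fin 3) (t : K) : Fin 3 → K := fun k => ![0, 1, t] (k - i)

theorem sideVec_comp_addRight (i : Fin 3) (t : K) : sideVec i t ∘ (· + i) = ![0, 1, t] :=
  funext fun k => by simp [sideVec]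

theorem sideVec_ne_zero (i : Fin 3) (t : K) : sideVec i t ≠ 0 :=
  fun h => by simpa [sideVec] using congrFun h (i + 1)

theorem sideVec_eq_zero_iff {t : K} (ht : t ≠ 0) (i k : Fin 3) :
    sideVec i t k = 0 ↔ k = i := by
  rw [sideVec, ← sub_eq_zero (a := k)]
  generalize k - i = m
  fin_cases m <;> simp [ht]

theorem sideVec_mem {n : ℕ} (hn : n ≠ 0) {t : K} (ht : t ^ n = -1) (i : Fin 3) :
    sideVec i t ∈ coordTriangle K ∩ fermatCone K n := by
  rw [Set.mem_inter_iff, ← comp_addRight_mem_coordTriangle_iff i,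
    ← comp_addRight_mem_fermatCone_iff i, sideVec_comp_addRight]
  simp [coordTriangle, fermatCone, Fin.prod_univ_three, Fin.sum_univ_three, hn, ht]

theorem exists_smul_sideVec_eq {n : ℕ} (hn : n ≠ 0) {v : Fin 3 → K} (hv : v ≠ 0)
    (h : v ∈ coordTriangle K ∩ fermatCone K n) :
    ∃ i : Fin 3, ∃ t : K, t ^ n = -1 ∧ ∃ c : K, c • sideVec i t = v := by
  obtain ⟨i, -, hi⟩ := Finset.prod_eq_zero_iff.1 h.1
  set r := v ∘ (· + i)
  have hv_eq : ∀ k, v k = r (k - i) := fun k => by simp [r]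
  have hr0 : r 0 = 0 := by simp [r, hi]
  have hsum : r 1 ^ n + r 2 ^ n = 0 := by
    have hrF : r ∈ fermatCone K n := (comp_addRight_mem_fermatCone_iff i).2 h.2
    simpa only [fermatCone, Set.mem_ofPred_eq, Fin.sum_univ_three, hr0, zero_pow hn, zero_add]
      using hrF
  have hr1 : r 1 ≠ 0 := by
    intro hr1
    have hr2 : r 2 = 0 := by simpa [hr1, hn] using hsum
    refine hv (funext fun k => ?_)
    rw [hv_eq]
    generalize k - i = m
    fin_cases m <;> simp [hr0, hr1, hr2]
  refine ⟨i, r 2 / r 1, ?_, r 1, funext fun k => ?_⟩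
  · rw [div_pow, div_eq_iff (pow_ne_zero n hr1)]
    linear_combination hsum
  · rw [hv_eq, Pi.smul_apply, sideVec, smul_eq_mul]
    generalize k - i = m
    fin_cases m <;> simp [hr0]
    field_simp

variable (K) in
def sidePoint (n : ℕ) (p : Fin 3 × {t : K // t ^ n = -1}) : ℙ K (Fin 3 → K) :=
  mk K (sideVec p.1 p.2) (sideVec_ne_zero _ _)

theorem sidePoint_injective {n : ℕ} (hn : n ≠ 0) : Function.Injective (sidePoint K n) := by
  rintro ⟨i, t, ht⟩ ⟨j, s, hs⟩ h
  obtain ⟨c, hc⟩ := (mk_eq_mk_iff' K _ _ _ _).1 h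
  have hij : j = i := by
    rw [← sideVec_eq_zero_iff (ne_zero_of_pow_eq_neg_one hn ht), ← hc, Pi.smul_apply,
      (sideVec_eq_zero_iff (ne_zero_of_pow_eq_neg_one hn hs) j j).2 rfl, smul_zero]
  subst hij
  have hc1 : c = 1 := by simpa [sideVec] using congrFun hc (j + 1)
  have hst : s = t := by simpa [sideVec, hc1] using congrFun hc (j + 2)
  subst hst
  rfl

theorem range_sidePoint {n : ℕ} (hn : n ≠ 0) :
    Set.range (sidePoint K n) = {P | P.rep ∈ coordTriangle K ∩ fermatCone K n} := by
  ext P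
  constructor
  · rintro ⟨⟨i, t, ht⟩, rfl⟩
    refine (mk_rep_mem_iff (fun c v hc => ?_) _).2 (sideVec_mem hn ht i)
    exact (smul_mem_coordTriangle_iff hc).and (smul_mem_fermatCone_iff hc)
  · intro hP
    obtain ⟨i, t, ht, c, hc⟩ := exists_smul_sideVec_eq hn P.rep_nonzero hP
    refine ⟨(i, ⟨t, ht⟩), ?_⟩
    rw [← P.mk_rep]
    exact ((mk_eq_mk_iff' K _ _ _ _).2 ⟨c, hc⟩).symm

theorem ncard_coordTriangle_inter_fermatCone {n : ℕ} (hn : n ≠ 0) :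
    {P : ℙ K (Fin 3 → K) | P.rep ∈ coordTriangle K ∩ fermatCone K n}.ncard =
      3 * Nat.card {t : K // t ^ n = -1} := by
  rw [← range_sidePoint hn, Set.ncard_range_of_injective (sidePoint_injective hn),
    Nat.card_prod, Nat.card_fin]

theorem nine_points_in_linear_section :
    {P : ℙ ℂ (Fin 3 → ℂ) |
        P.rep 0 * P.rep 1 * P.rep 2 = 0 ∧
        P.rep 0 ^ 3 + P.rep 1 ^ 3 + P.rep 2 ^ 3 = 0}.ncard = 9 := by
  have hζ := Complex.isPrimitiveRoot_exp 3 three_ne_zero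
  have key := ncard_coordTriangle_inter_fermatCone (K := ℂ) three_ne_zero
  rw [show (-1 : ℂ) = (-1) ^ 3 by norm_num,
    hζ.natCard_pow_eq three_ne_zero (neg_ne_zero.2 one_ne_zero)] at key
  simpa [coordTriangle, fermatCone, Fin.prod_univ_three, Fin.sum_univ_three] using key
end

section
/- Let φ : ℂ³ → ℂ⁶ be defined by φ(x, y, z) = (xyz, x(z² − xy), x(xz − y²), y(x² − yz), y(xy − z²), 3xyz − (x³ + y³ + z³)). If (x, y, z) and (x₁, y₁, z₁) are nonzero vectors in ℂ³, each satisfying xyz = 0 and x³ + y³ + z³ = 0 (respectively x₁y₁z₁ = 0 and x₁³ + y₁³ + z₁³ = 0), and φ(x₁, y₁, z₁) is a nonzero scalar multiple of φ(x, y, z), then (x₁, y₁, z₁) is a nonzero scalar multiple of (x, y, z). In other words, φ is injective, as a map of projective points, on the nine points of ℙ² lying over the linear space {Z₀ = Z₅ = 0}. -/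
theorem phi_injective_on_hyperplane_section (x y z x₁ y₁ z₁ : ℂ)
    (h : (x, y, z) ≠ (0, 0, 0)) (h₁ : (x₁, y₁, z₁) ≠ (0, 0, 0))
    (h0 : x * y * z = 0) (h5 : x ^ 3 + y ^ 3 + z ^ 3 = 0)
    (h0' : x₁ * y₁ * z₁ = 0) (h5' : x₁ ^ 3 + y₁ ^ 3 + z₁ ^ 3 = 0)
    (t : ℂ) (ht : t ≠ 0) (heq : phi x₁ y₁ z₁ = t • phi x y z) :
    ∃ c : ℂ, c ≠ 0 ∧ (x₁, y₁, z₁) = c • (x, y, z) := by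
  simp only [phi, Prod.smul_mk, smul_eq_mul, Prod.mk.injEq] at heq
  obtain ⟨e1, e2, e3, e4, e5, e6⟩ := heq
  rcases mul_eq_zero.mp h0 with h' | hz
  · rcases mul_eq_zero.mp h' with hx | hy
    · -- x = 0
      subst hx
      have hy : y ≠ 0 := by
        rintro rfl
        have hz : z = 0 := by
          have : z ^ 3 = 0 := by linear_combination h5
          exact pow_eq_zero_iff (by norm_num) |>.mp this
        exact h (by simp [hz])
      have hz : z ≠ 0 := by
        rintro rfl
        have hy' : y = 0 := by
          have : y ^ 3 = 0 := by linear_combination h5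
          exact pow_eq_zero_iff (by norm_num) |>.mp this
        exact hy hy'
      have key4 : t * (y * ((0:ℂ) ^ 2 - y * z)) ≠ 0 := by
        apply mul_ne_zero ht
        apply mul_ne_zero hy
        intro hc
        exact mul_ne_zero hy hz (by linear_combination -hc)
      have hy₁ : y₁ ≠ 0 := by
        intro hy₁
        exact key4 (by rw [← e4, hy₁, zero_mul])
      have hx₁ : x₁ = 0 := by
        by_contra hx₁
        have hz₁ : z₁ = 0 := by
          rcases mul_eq_zero.mp h0' with h'' | hz₁
          · rcases mul_eq_zero.mp h'' with h3 | h4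
            · exact absurd h3 hx₁
            · exact absurd h4 hy₁
          · exact hz₁
        have : x₁ * (z₁ ^ 2 - x₁ * y₁) = 0 := by rw [e2]; ring
        rw [hz₁] at this
        have : x₁ * (x₁ * y₁) = 0 := by linear_combination -this
        exact mul_ne_zero hx₁ (mul_ne_zero hx₁ hy₁) (by linear_combination this)
      subst hx₁
      have hz₁ : z₁ ≠ 0 := by
        rintro rfl
        have : y₁ ^ 3 = 0 := by linear_combination h5'
        exact hy₁ (pow_eq_zero_iff (by norm_num) |>.mp this)
      have key : y₁ * z₁ * (y₁ * z - z₁ * y) = 0 := by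
        linear_combination y * e5 - z * e4
      have hkey : y₁ * z = z₁ * y := by
        rcases mul_eq_zero.mp key with h'' | h''
        · exact absurd h'' (mul_ne_zero hy₁ hz₁)
        · linear_combination h''
      refine ⟨y₁ / y, div_ne_zero hy₁ hy, ?_⟩
      simp only [Prod.smul_mk, smul_eq_mul, Prod.mk.injEq]
      refine ⟨by ring, by field_simp, ?_⟩
      field_simp
      linear_combination -hkey
    · -- y = 0
      subst hy
      have hx : x ≠ 0 := by
        rintro rfl
        have hz : z = 0 := by
          have : z ^ 3 = 0 := by linear_combination h5
          exact pow_eq_zero_iff (by norm_num) |>.mp this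
        exact h (by simp [hz])
      have hz : z ≠ 0 := by
        rintro rfl
        have : x ^ 3 = 0 := by linear_combination h5
        exact hx (pow_eq_zero_iff (by norm_num) |>.mp this)
      have key2 : t * (x * (z ^ 2 - x * (0:ℂ))) ≠ 0 := by
        apply mul_ne_zero ht
        apply mul_ne_zero hx
        intro hc
        exact mul_ne_zero hz hz (by linear_combination hc)
      have hx₁ : x₁ ≠ 0 := by
        intro hx₁
        exact key2 (by rw [← e2, hx₁, zero_mul])
      have hy₁ : y₁ = 0 := by
        by_contra hy₁
        have hz₁ : z₁ = 0 := by
          rcases mul_eq_zero.mp h0' with h'' | hz₁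
          · rcases mul_eq_zero.mp h'' with h3 | h4
            · exact absurd h3 hx₁
            · exact absurd h4 hy₁
          · exact hz₁
        have : y₁ * (x₁ ^ 2 - y₁ * z₁) = 0 := by rw [e4]; ring
        rw [hz₁] at this
        have : y₁ * x₁ ^ 2 = 0 := by linear_combination this
        exact mul_ne_zero hy₁ (pow_ne_zero 2 hx₁) this
      subst hy₁
      have hz₁ : z₁ ≠ 0 := by
        rintro rfl
        have : x₁ ^ 3 = 0 := by linear_combination h5'
        exact hx₁ (pow_eq_zero_iff (by norm_num) |>.mp this)
      have key : x₁ * z₁ * (x₁ * z - z₁ * x) = 0 := by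
        linear_combination z * e3 - x * e2
      have hkey : x₁ * z = z₁ * x := by
        rcases mul_eq_zero.mp key with h'' | h''
        · exact absurd h'' (mul_ne_zero hx₁ hz₁)
        · linear_combination h''
      refine ⟨x₁ / x, div_ne_zero hx₁ hx, ?_⟩
      simp only [Prod.smul_mk, smul_eq_mul, Prod.mk.injEq]
      refine ⟨by field_simp, by ring, ?_⟩
      field_simp
      linear_combination -hkey
  · -- z = 0
    subst hz
    have hx : x ≠ 0 := by
      rintro rfl
      have hy : y = 0 := by
        have : y ^ 3 = 0 := by linear_combination h5
        exact pow_eq_zero_iff (by norm_num) |>.mp this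
      exact h (by simp [hy])
    have hy : y ≠ 0 := by
      rintro rfl
      have : x ^ 3 = 0 := by linear_combination h5
      exact hx (pow_eq_zero_iff (by norm_num) |>.mp this)
    have key2 : t * (x * ((0:ℂ) ^ 2 - x * y)) ≠ 0 := by
      apply mul_ne_zero ht
      apply mul_ne_zero hx
      intro hc
      exact mul_ne_zero hx hy (by linear_combination -hc)
    have key4 : t * (y * (x ^ 2 - y * (0:ℂ))) ≠ 0 := by
      apply mul_ne_zero ht
      apply mul_ne_zero hy
      intro hc
      exact mul_ne_zero hx hx (by linear_combination hc)
    have hx₁ : x₁ ≠ 0 := by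
      intro hx₁
      exact key2 (by rw [← e2, hx₁, zero_mul])
    have hy₁ : y₁ ≠ 0 := by
      intro hy₁
      exact key4 (by rw [← e4, hy₁, zero_mul])
    have hz₁ : z₁ = 0 := by
      rcases mul_eq_zero.mp h0' with h'' | hz₁
      · rcases mul_eq_zero.mp h'' with h3 | h4
        · exact absurd h3 hx₁
        · exact absurd h4 hy₁
      · exact hz₁
    subst hz₁
    have key : x₁ * y₁ * (x₁ * y - y₁ * x) = 0 := by
      linear_combination y * e4 - x * e5
    have hkey : x₁ * y = y₁ * x := by
      rcases mul_eq_zero.mp key with h'' | h''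
      · exact absurd h'' (mul_ne_zero hx₁ hy₁)
      · linear_combination h''
    refine ⟨x₁ / x, div_ne_zero hx₁ hx, ?_⟩
    simp only [Prod.smul_mk, smul_eq_mul, Prod.mk.injEq]
    refine ⟨by field_simp, ?_, by ring⟩
    field_simp
    linear_combination -hkey
end

section
/- Let x, y, x₁, y₁ ∈ ℂ with xy ≠ 0 and x₁y₁ ≠ 0. If 1/y − x = 1/y₁ − x₁, x/y − y = x₁/y₁ − y₁, y/x − x = y₁/x₁ − x₁, and 1/x − y = 1/x₁ − y₁, then either (x, y) = (x₁, y₁), or both xy = 1 and x₁y₁ = 1. -/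
theorem affine_four_coordinates_injectivity (x y x₁ y₁ : ℂ)
    (hxy : x * y ≠ 0) (hxy₁ : x₁ * y₁ ≠ 0)
    (e1 : 1 / y - x = 1 / y₁ - x₁)
    (e2 : x / y - y = x₁ / y₁ - y₁)
    (e3 : y / x - x = y₁ / x₁ - x₁)
    (e4 : 1 / x - y = 1 / x₁ - y₁) :
    (x, y) = (x₁, y₁) ∨ (x * y = 1 ∧ x₁ * y₁ = 1) := by
  have hx : x ≠ 0 := fun h => hxy (by simp [h])
  have hy : y ≠ 0 := fun h => hxy (by simp [h])
  have hx1 : x₁ ≠ 0 := fun h => hxy₁ (by simp [h])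
  have hy1 : y₁ ≠ 0 := fun h => hxy₁ (by simp [h])
  have hA : y₁ - y = y * y₁ * (x - x₁) := by
    field_simp at e1; linear_combination e1
  have hB : x₁ - x = x * x₁ * (y - y₁) := by
    field_simp at e4; linear_combination e4
  have hC : x * y₁ - x₁ * y = y * y₁ * (y - y₁) := by
    field_simp at e2; linear_combination e2
  by_cases hd : x = x₁
  · left
    have hyy : y = y₁ := by
      have h0 : y₁ - y = 0 := by rw [hA, hd]; ring
      exact (sub_eq_zero.mp h0).symm
    rw [hd, hyy]
  · right
    have hdd : x - x₁ ≠ 0 := sub_ne_zero.mpr hd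
    have hpq : x * x₁ * (y * y₁) = 1 := by
      have hpq0 : (x * x₁ * (y * y₁) - 1) * (x - x₁) = 0 := by
        linear_combination hB - x * x₁ * hA
      rcases mul_eq_zero.mp hpq0 with h | h
      · exact sub_eq_zero.mp h
      · exact absurd h hdd
    have hK1 : (y * y₁ * x + y) * (x * y - 1) = 0 := by
      linear_combination (-(x * y)) * hA + y * hpq
    rcases mul_eq_zero.mp hK1 with h | h
    · -- y*y₁*x + y = 0, derive contradiction
      exfalso
      have hxy1' : x * y₁ = -1 := by
        have : y * (y₁ * x + 1) = 0 := by linear_combination h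
        rcases mul_eq_zero.mp this with h' | h'
        · exact absurd h' hy
        · linear_combination h'
      have hx1y : x₁ * y = -1 := by
        linear_combination x₁ * y * hxy1' - hpq
      have hyy : y = y₁ := by
        have h0 : y * y₁ * (y - y₁) = 0 := by
          linear_combination -hC + hxy1' - hx1y
        rcases mul_eq_zero.mp h0 with h' | h'
        · exact absurd h' (mul_ne_zero hy hy1)
        · exact sub_eq_zero.mp h'
      have h0 : y * y₁ * (x - x₁) = 0 := by
        rw [← hA, hyy]; ring
      rcases mul_eq_zero.mp h0 with h' | h'
      · exact absurd h' (mul_ne_zero hy hy1)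
      · exact hdd h'
    · have hxyone : x * y = 1 := sub_eq_zero.mp h
      exact ⟨hxyone, by linear_combination hpq - x₁ * y₁ * hxyone⟩
end

section
/- For all x, y ∈ ℂ with xy ≠ 0, the 2 × 5 complex matrix whose first row is (−1, 1/y, 1 + y/x², 1/x², −2x/y + y²/x² + 1/(x²y)) and whose second row is (−1/y², −x/y² − 1, −1/x, 1, x²/y² − 2y/x + 1/(xy²)) has rank 2; equivalently, some 2 × 2 minor of this matrix is nonzero. -/
/-!
A maximal minor of the Jacobian that does not vanish certifies rank 2. Clearing denominators,
the minors on the columns `(0, 3)`, `(0, 1)`, `(2, 3)`, `(1, 2)` are, up to monomial factors,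
`x²y² - 1`, `xy + y³ + 1`, `x³ + xy + 1` and `x³ + x²y² + y³`. Their signed sum
(first + second + third - fourth) is `2xy + 1`, so they cannot all vanish: that would force
`xy = -1/2` and `(xy)² = 1` at once.
-/

open Matrix

theorem Matrix.rank_eq_card_of_det_submatrix_ne_zero {K m n : Type*} [Field K] [Fintype m]
    [DecidableEq m] [Fintype n] (M : Matrix m n K) (c : m → n)
    (h : (M.submatrix id c).det ≠ 0) : M.rank = Fintype.card m :=
  le_antisymm M.rank_le_card_height <|
    (rank_of_isUnit _ ((isUnit_iff_isUnit_det _).mpr h.isUnit)).symm.trans_le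
      (M.rank_submatrix_le id c)

theorem jacobian_minor_numerators_not_all_zero {K : Type*} [Field K] [CharZero K] (x y : K) :
    x ^ 2 * y ^ 2 - 1 ≠ 0 ∨ x * y + y ^ 3 + 1 ≠ 0 ∨ x ^ 3 + x * y + 1 ≠ 0 ∨
      x ^ 3 + x ^ 2 * y ^ 2 + y ^ 3 ≠ 0 := by
  by_contra! ⟨h03, h01, h23, h12⟩
  have hxy : x * y = -1 / 2 := by linear_combination (h03 + h01 + h23 - h12) / 2
  have hsq : (x * y) ^ 2 = 1 := by linear_combination h03
  rw [hxy] at hsq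
  norm_num at hsq

section Jacobian

variable (x y : ℂ)

noncomputable def jacobian : Matrix (Fin 2) (Fin 5) ℂ :=
  Matrix.of
    ![![-1, 1 / y, 1 + y / x ^ 2, 1 / x ^ 2,
        -2 * x / y + y ^ 2 / x ^ 2 + 1 / (x ^ 2 * y)],
      ![-1 / y ^ 2, -x / y ^ 2 - 1, -1 / x, 1,
        x ^ 2 / y ^ 2 - 2 * y / x + 1 / (x * y ^ 2)]]

variable {x y}

theorem det_jacobian_cols_0_3 (hx : x ≠ 0) (hy : y ≠ 0) :
    ((jacobian x y).submatrix id ![0, 3]).det = -(x ^ 2 * y ^ 2 - 1) / (x ^ 2 * y ^ 2) := by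
  simp only [jacobian, det_fin_two, submatrix_apply, id_eq, of_apply, cons_val_zero,
    cons_val_one, cons_val, cons_val_fin_one]
  field_simp
  ring

theorem det_jacobian_cols_0_1 (hy : y ≠ 0) :
    ((jacobian x y).submatrix id ![0, 1]).det = (x * y + y ^ 3 + 1) / y ^ 3 := by
  simp only [jacobian, det_fin_two, submatrix_apply, id_eq, of_apply, cons_val_zero,
    cons_val_one, cons_val_fin_one]
  field_simp
  ring

theorem det_jacobian_cols_2_3 (hx : x ≠ 0) :
    ((jacobian x y).submatrix id ![2, 3]).det = (x ^ 3 + x * y + 1) / x ^ 3 := by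
  simp only [jacobian, det_fin_two, submatrix_apply, id_eq, of_apply, cons_val_zero,
    cons_val_one, cons_val, cons_val_fin_one]
  field_simp
  ring

theorem det_jacobian_cols_1_2 (hx : x ≠ 0) (hy : y ≠ 0) :
    ((jacobian x y).submatrix id ![1, 2]).det =
      (x ^ 3 + x ^ 2 * y ^ 2 + y ^ 3) / (x ^ 2 * y ^ 2) := by
  simp only [jacobian, det_fin_two, submatrix_apply, id_eq, of_apply, cons_val_zero,
    cons_val_one, cons_val, cons_val_fin_one]
  field_simp
  ring

end Jacobian

theorem jacobian_rank_two (x y : ℂ) (hxy : x * y ≠ 0) :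
    (Matrix.of
      ![![-1, 1 / y, 1 + y / x ^ 2, 1 / x ^ 2,
          -2 * x / y + y ^ 2 / x ^ 2 + 1 / (x ^ 2 * y)],
        ![-1 / y ^ 2, -x / y ^ 2 - 1, -1 / x, 1,
          x ^ 2 / y ^ 2 - 2 * y / x + 1 / (x * y ^ 2)]] :
        Matrix (Fin 2) (Fin 5) ℂ).rank = 2 := by
  obtain ⟨hx, hy⟩ := mul_ne_zero_iff.mp hxy
  change (jacobian x y).rank = Fintype.card (Fin 2)
  rcases jacobian_minor_numerators_not_all_zero x y with h | h | h | h
  · refine rank_eq_card_of_det_submatrix_ne_zero _ ![0, 3] ?_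
    rw [det_jacobian_cols_0_3 hx hy]
    exact div_ne_zero (neg_ne_zero.mpr h) (by simp [hx, hy])
  · refine rank_eq_card_of_det_submatrix_ne_zero _ ![0, 1] ?_
    rw [det_jacobian_cols_0_1 hy]
    exact div_ne_zero h (pow_ne_zero 3 hy)
  · refine rank_eq_card_of_det_submatrix_ne_zero _ ![2, 3] ?_
    rw [det_jacobian_cols_2_3 hx]
    exact div_ne_zero h (pow_ne_zero 3 hx)
  · refine rank_eq_card_of_det_submatrix_ne_zero _ ![1, 2] ?_
    rw [det_jacobian_cols_1_2 hx hy]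
    exact div_ne_zero h (by simp [hx, hy])
end

section
/- Let x, y, x₁, y₁ ∈ ℂ with xy ≠ 0 and x₁y₁ ≠ 0, and let ω ∈ ℂ satisfy ω² + ω + 1 = 0. If 1/y − x = 1/y₁ − x₁, x/y − y = x₁/y₁ − y₁, y/x − x = y₁/x₁ − x₁, 1/x − y = 1/x₁ − y₁, and 3 − x²/y − y²/x − 1/(xy) = 3 − x₁²/y₁ − y₁²/x₁ − 1/(x₁y₁), then either (x, y) = (x₁, y₁), or both (x, y) and (x₁, y₁) belong to the set {(1, 1), (ω, ω²), (ω², ω)}. -/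
private lemma cancel3 {a b c : ℂ} (ha : a ≠ 0) (hb : b ≠ 0) (h : a * (b * c) = 0) : c = 0 := by
  rcases mul_eq_zero.mp h with h' | h'
  · exact absurd h' ha
  rcases mul_eq_zero.mp h' with h'' | h''
  · exact absurd h'' hb
  · exact h''

theorem affine_chart_injectivity (x y x₁ y₁ ω : ℂ)
    (hxy : x * y ≠ 0) (hxy₁ : x₁ * y₁ ≠ 0) (hω : ω ^ 2 + ω + 1 = 0)
    (e1 : 1 / y - x = 1 / y₁ - x₁)
    (e2 : x / y - y = x₁ / y₁ - y₁)
    (e3 : y / x - x = y₁ / x₁ - x₁)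
    (e4 : 1 / x - y = 1 / x₁ - y₁)
    (e5 : 3 - x ^ 2 / y - y ^ 2 / x - 1 / (x * y) =
          3 - x₁ ^ 2 / y₁ - y₁ ^ 2 / x₁ - 1 / (x₁ * y₁)) :
    (x, y) = (x₁, y₁) ∨
    ((x, y) ∈ ({(1, 1), (ω, ω ^ 2), (ω ^ 2, ω)} : Set (ℂ × ℂ)) ∧
     (x₁, y₁) ∈ ({(1, 1), (ω, ω ^ 2), (ω ^ 2, ω)} : Set (ℂ × ℂ))) := by
  obtain ⟨hx, hy⟩ := mul_ne_zero_iff.mp hxy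
  obtain ⟨hx1, hy1⟩ := mul_ne_zero_iff.mp hxy₁
  have f1 : y₁ - y + (x₁ - x) * (y * y₁) = 0 := by
    field_simp at e1; linear_combination e1
  have f2 : x * y₁ - y ^ 2 * y₁ - x₁ * y + y * y₁ ^ 2 = 0 := by
    field_simp at e2; linear_combination e2
  have f3 : y * x₁ - x ^ 2 * x₁ - y₁ * x + x * x₁ ^ 2 = 0 := by
    field_simp at e3; linear_combination e3
  have f4 : x₁ - x + (y₁ - y) * (x * x₁) = 0 := by
    field_simp at e4; linear_combination e4
  by_cases ha : x₁ - x = 0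
  · left
    have hyy : y₁ - y = 0 := by
      have h : (y₁ - y) * (x * x₁) = 0 := by linear_combination f4 - ha
      rcases mul_eq_zero.mp h with h' | h'
      · exact h'
      · exact absurd h' (mul_ne_zero hx hx1)
    have : x = x₁ := by linear_combination -ha
    have : y = y₁ := by linear_combination -hyy
    simp_all
  · have key : (x₁ - x) * (x * x₁ * y * y₁ - 1) = 0 := by
      linear_combination (x * x₁) * f1 - f4
    have hP : x * x₁ * y * y₁ - 1 = 0 := by
      rcases mul_eq_zero.mp key with h | h
      · exact absurd h ha
      · exact h
    have hb : y₁ - y ≠ 0 := by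
      intro h
      apply ha
      have h2 : (x₁ - x) * (y * y₁) = 0 := by linear_combination f1 - h
      rcases mul_eq_zero.mp h2 with h' | h'
      · exact h'
      · exact absurd h' (mul_ne_zero hy hy1)
    have hE2 : x * y₁ + y * y₁ ^ 2 + 1 = 0 :=
      cancel3 ha hy (by linear_combination (x + y * y₁) * f1 - f2)
    have hE2s : x₁ * y + y ^ 2 * y₁ + 1 = 0 :=
      cancel3 ha hy1 (by linear_combination (x₁ + y * y₁) * f1 - f2)
    have hE3 : y * x₁ + x * x₁ ^ 2 + 1 = 0 :=
      cancel3 hb hx (by linear_combination (y + x * x₁) * f4 - f3)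
    have hE3s : y₁ * x + x ^ 2 * x₁ + 1 = 0 :=
      cancel3 hb hx1 (by linear_combination (y₁ + x * x₁) * f4 - f3)
    have hQ1 : y + y₁ + (y * y₁) ^ 2 = 0 := by
      have h : (y * y₁) * ((y + y₁ + (y * y₁) ^ 2)) = 0 := by
        linear_combination (x₁ * y + y ^ 2 * y₁ + 1 - x₁ * y) * hE2 - (x * y₁) * hE2s + hP
      rcases mul_eq_zero.mp h with h' | h'
      · exact absurd h' (mul_ne_zero hy hy1)
      · exact h'
    have hvpp : y * y₁ ^ 2 + y ^ 2 * y₁ + (y * y₁) ^ 3 = 0 := by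
      linear_combination (y * y₁) * hQ1
    have hu : (y * y₁ * y) ^ 2 + (y * y₁ * y) + 1 = 0 := by
      linear_combination (y * y₁ * (y + x * x₁)) * hE2s - (y * y₁ * y) * hE3
        - (1 + y * y₁ * y) * hP
    have hv : (y * y₁ * y₁) ^ 2 + (y * y₁ * y₁) + 1 = 0 := by
      linear_combination (y * y₁ * (y₁ + x * x₁)) * hE2 - (y * y₁ * y₁) * hE3s
        - (1 + y * y₁ * y₁) * hP
    have hfac : ((y * y₁) ^ 3 - 1) * (2 * (y ^ 2 * y₁) + (y * y₁) ^ 3) = 0 := by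
      linear_combination hv - (y * y₁ ^ 2 - (y ^ 2 * y₁ + (y * y₁) ^ 3) + 1) * hvpp - hu
    have hfac2 : ((y * y₁) ^ 3 - 1) * (2 * (y * y₁ ^ 2) + (y * y₁) ^ 3) = 0 := by
      linear_combination hu - (y ^ 2 * y₁ - (y * y₁ ^ 2 + (y * y₁) ^ 3) + 1) * hvpp - hv
    have hs3 : (y * y₁) ^ 3 = 1 := by
      rcases mul_eq_zero.mp hfac with h | h
      · linear_combination h
      rcases mul_eq_zero.mp hfac2 with h2 | h2
      · linear_combination h2
      -- h : 2u + s³ = 0, h2 : 2v + s³ = 0 ⇒ u = v ⇒ y = y₁, contradiction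
      exfalso
      apply hb
      have h3 : (y * y₁) * (y₁ - y) = 0 := by linear_combination (h2 - h) / 2
      rcases mul_eq_zero.mp h3 with h' | h'
      · exact absurd h' (mul_ne_zero hy hy1)
      · exact h'
    have hy3 : y ^ 3 = 1 := by
      linear_combination (y ^ 2 * y₁ - 1) * hu - y ^ 3 * hs3
    have hy13 : y₁ ^ 3 = 1 := by
      linear_combination (y * y₁ ^ 2 - 1) * hv - y₁ ^ 3 * hs3
    have hx2 : x = y ^ 2 := by
      have h : y₁ * (x - y ^ 2) = 0 := by linear_combination hE2 - hvpp + hs3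
      rcases mul_eq_zero.mp h with h' | h'
      · exact absurd h' hy1
      · linear_combination h'
    have hx12 : x₁ = y₁ ^ 2 := by
      have h : y * (x₁ - y₁ ^ 2) = 0 := by linear_combination hE2s - hvpp + hs3
      rcases mul_eq_zero.mp h with h' | h'
      · exact absurd h' hy
      · linear_combination h'
    have hω3 : ω ^ 3 = 1 := by linear_combination (ω - 1) * hω
    right
    constructor
    · have hcube : (y - 1) * ((y - ω) * (y - ω ^ 2)) = 0 := by
        linear_combination hy3 + (-y ^ 2 + ω * y + 1 - ω) * hω
      simp only [Set.mem_insert_iff, Set.mem_singleton_iff, Prod.mk.injEq]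
      rcases mul_eq_zero.mp hcube with h | h
      · left
        have hy' : y = 1 := by linear_combination h
        exact ⟨by rw [hx2, hy']; ring, hy'⟩
      rcases mul_eq_zero.mp h with h' | h'
      · right; right
        have hy' : y = ω := by linear_combination h'
        exact ⟨by rw [hx2, hy'], hy'⟩
      · right; left
        have hy' : y = ω ^ 2 := by linear_combination h'
        exact ⟨by rw [hx2, hy']; linear_combination ω * hω3, hy'⟩
    · have hcube : (y₁ - 1) * ((y₁ - ω) * (y₁ - ω ^ 2)) = 0 := by
        linear_combination hy13 + (-y₁ ^ 2 + ω * y₁ + 1 - ω) * hω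
      simp only [Set.mem_insert_iff, Set.mem_singleton_iff, Prod.mk.injEq]
      rcases mul_eq_zero.mp hcube with h | h
      · left
        have hy' : y₁ = 1 := by linear_combination h
        exact ⟨by rw [hx12, hy']; ring, hy'⟩
      rcases mul_eq_zero.mp h with h' | h'
      · right; right
        have hy' : y₁ = ω := by linear_combination h'
        exact ⟨by rw [hx12, hy'], hy'⟩
      · right; left
        have hy' : y₁ = ω ^ 2 := by linear_combination h'
        exact ⟨by rw [hx12, hy']; linear_combination ω * hω3, hy'⟩
end
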